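/- Let Ā' be the block matrix with first block row [Ā₀, Ē_{0,1}, …, Ē_{0,l}] and diagonal blocks Ā₀ ∈ {0,1}^{n₀×n₀}, Ā₁ ∈ {0,1}^{n₁×n₁}, …, Ā_l ∈ {0,1}^{n_l×n_l} (all other blocks zero), and let B̄' = [B̄₀ᵀ, 0, …, 0]ᵀ with B̄₀ ∈ {0,1}^{n₀×p₀}. Assign to each edge of the system bipartite graph B(Ā', B̄') the weight 1 if it joins a left state vertex x_j to a right state vertex x_k with both indices j, k ≤ n₀ or both indices j, k > n₀, and weight 2 otherwise (in particular every input edge has weight 2). Then for any minimum-weight maximum matching M of B(Ā', B̄') w.r.t. this weight, the restriction of M to the edges of B(Ā₀) (edges between left and right state vertices of block 0) is a maximum matching of the state bipartite graph B(Ā₀), and for each k = 1,…,l the restriction of M to the edges of B(Ā_k) is a maximum matching of B(Ā_k). -/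

import Mathlib

open Matrix

/-- Controllability matrix `[B, AB, …, A^{n-1}B]` (columns indexed by `Fin (card X) × U`). -/
def ctrbMatrix {X U : Type*} [Fintype X] [DecidableEq X]
    (A : Matrix X X ℝ) (B : Matrix X U ℝ) :
    Matrix X (Fin (Fintype.card X) × U) ℝ :=
  fun i kj => (A ^ (kj.1 : ℕ) * B) i kj.2

/-- A real pair `(A,B)` is controllable if its controllability matrix has full rank. -/
def Controllable {X U : Type*} [Fintype X] [DecidableEq X] [Fintype U]
    (A : Matrix X X ℝ) (B : Matrix X U ℝ) : Prop :=
  (ctrbMatrix A B).rank = Fintype.card X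

/-- `M` has the same sparsity pattern as the Boolean matrix `Mb`. -/
def SameSparsity {X Y : Type*} (M : Matrix X Y ℝ) (Mb : Matrix X Y Bool) : Prop :=
  ∀ i j, M i j = 0 ↔ Mb i j = false

/-- Structural controllability of a structural (Boolean) pair. -/
def StructurallyControllable {X U : Type*} [Fintype X] [DecidableEq X] [Fintype U]
    (Ab : Matrix X X Bool) (Bb : Matrix X U Bool) : Prop :=
  ∃ A : Matrix X X ℝ, ∃ B : Matrix X U ℝ,
    SameSparsity A Ab ∧ SameSparsity B Bb ∧ Controllable A B

/-- Edge relation of the system digraph `D(Ā,B̄)`. -/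
def sysDigraphRel {X U : Type*} (Ab : Matrix X X Bool) (Bb : Matrix X U Bool) :
    (X ⊕ U) → (X ⊕ U) → Prop :=
  fun v w => match v, w with
  | Sum.inl j, Sum.inl i => Ab i j = true
  | Sum.inr k, Sum.inl i => Bb i k = true
  | _, Sum.inr _ => False

/-- A state vertex is input-reachable if some input vertex has a directed path to it. -/
def InputReachable {X U : Type*} (Ab : Matrix X X Bool) (Bb : Matrix X U Bool) (x : X) : Prop :=
  ∃ u : U, Relation.ReflTransGen (sysDigraphRel Ab Bb) (Sum.inr u) (Sum.inl x)

/-- Edge relation of the system bipartite graph `B(Ā,B̄)` (left = states ⊕ inputs, right = states). -/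
def sysBipEdge {X U : Type*} (Ab : Matrix X X Bool) (Bb : Matrix X U Bool) :
    (X ⊕ U) → X → Prop :=
  fun v i => match v with
  | Sum.inl j => Ab i j = true
  | Sum.inr k => Bb i k = true

/-- Edge relation of the state bipartite graph `B(Ā)`. -/
def stateBipEdge {X : Type*} (Ab : Matrix X X Bool) : X → X → Prop :=
  fun j i => Ab i j = true

/-- A matching of a bipartite graph with edge relation `E`: a set of edges sharing no
left vertex and no right vertex. -/
def IsMatching {α β : Type*} (E : α → β → Prop) (M : Set (α × β)) : Prop :=
  (∀ e ∈ M, E e.1 e.2) ∧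
  (∀ e ∈ M, ∀ f ∈ M, e.1 = f.1 → e = f) ∧
  (∀ e ∈ M, ∀ f ∈ M, e.2 = f.2 → e = f)

/-- Right vertices belonging to no edge of `M`. -/
def rightUnmatched {α β : Type*} (M : Set (α × β)) : Set β :=
  {b | ∀ e ∈ M, e.2 ≠ b}

/-- Left vertices belonging to no edge of `M`. -/
def leftUnmatched {α β : Type*} (M : Set (α × β)) : Set α :=
  {a | ∀ e ∈ M, e.1 ≠ a}

/-- A maximum matching: a matching of the largest cardinality. -/
def IsMaxMatching {α β : Type*} (E : α → β → Prop) (M : Set (α × β)) : Prop :=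
  IsMatching E M ∧ ∀ M' : Set (α × β), IsMatching E M' → M'.ncard ≤ M.ncard

/-- `S` is a strongly connected component of the digraph with edge relation `R`. -/
def IsSCC {V : Type*} (R : V → V → Prop) (S : Set V) : Prop :=
  S.Nonempty ∧ (∀ u ∈ S, ∀ v ∈ S, Relation.ReflTransGen R u v) ∧
  ∀ w : V, (∀ u ∈ S, Relation.ReflTransGen R u w ∧ Relation.ReflTransGen R w u) → w ∈ S

/-- An SCC is non-top linked if it has no incoming edge from outside. -/
def NonTopLinked {V : Type*} (R : V → V → Prop) (S : Set V) : Prop :=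
  ∀ u v : V, R u v → v ∈ S → u ∈ S

/-- Dynamics pattern `(I_r ⊗ Ā') ∨ (Ē ⊗ H̄)` of a system of `r` similar subsystems. -/
def simA {n : ℕ} (r : ℕ) (A' H : Matrix (Fin n) (Fin n) Bool)
    (E : Matrix (Fin r) (Fin r) Bool) :
    Matrix (Fin r × Fin n) (Fin r × Fin n) Bool :=
  fun q q' => ((if q.1 = q'.1 then A' q.2 q'.2 else false) || (E q.1 q'.1 && H q.2 q'.2))

/-- Input pattern `I_r ⊗ B̄'` of a system of `r` similar subsystems. -/
def simB {n p : ℕ} (r : ℕ) (B' : Matrix (Fin n) (Fin p) Bool) :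
    Matrix (Fin r × Fin n) (Fin r × Fin p) Bool :=
  fun q k => if q.1 = k.1 then B' q.2 k.2 else false

/-- Entrywise OR of Boolean matrices. -/
def orMat {X Y : Type*} (M N : Matrix X Y Bool) : Matrix X Y Bool :=
  fun i j => M i j || N i j

/-- Dynamics pattern of an interconnected system: diagonal blocks `Ā_i`,
off-diagonal blocks `Ē_{i,j}`. -/
def interA {r : ℕ} {n : Fin r → ℕ}
    (A : ∀ i, Matrix (Fin (n i)) (Fin (n i)) Bool)
    (E : ∀ i j, Matrix (Fin (n i)) (Fin (n j)) Bool) :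
    Matrix (Σ i, Fin (n i)) (Σ i, Fin (n i)) Bool :=
  fun q q' => if h : q'.1 = q.1 then A q.1 q.2 (h ▸ q'.2) else E q.1 q'.1 q.2 q'.2

/-- Input pattern of an interconnected system: block diagonal with blocks `B̄_i`. -/
def interB {r : ℕ} {n p : Fin r → ℕ}
    (B : ∀ i, Matrix (Fin (n i)) (Fin (p i)) Bool) :
    Matrix (Σ i, Fin (n i)) (Σ i, Fin (p i)) Bool :=
  fun q k => if h : k.1 = q.1 then B q.1 q.2 (h ▸ k.2) else false

/-- A minimum-weight maximum matching w.r.t. the edge weight `c`. -/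
def IsMinWtMaxMatching {α β : Type*} (E : α → β → Prop) (c : α × β → ℕ)
    (M : Set (α × β)) : Prop :=
  IsMaxMatching E M ∧
    ∀ M' : Set (α × β), IsMaxMatching E M' → (∑ᶠ e ∈ M, c e) ≤ ∑ᶠ e ∈ M', c e

/-- The block matrix `Ā'` with first block row `[Ā₀, Ē₁, …, Ē_l]` and diagonal blocks
`Ā₀, Ā₁, …, Ā_l` (all other blocks zero); block `0` is indexed by `Sum.inl`, blocks
`1, …, l` by `Sum.inr`. -/
def blockA {n0 l : ℕ} {m : Fin l → ℕ}
    (A0 : Matrix (Fin n0) (Fin n0) Bool)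
    (Ak : ∀ k, Matrix (Fin (m k)) (Fin (m k)) Bool)
    (Ek : ∀ k, Matrix (Fin n0) (Fin (m k)) Bool) :
    Matrix (Fin n0 ⊕ (Σ k, Fin (m k))) (Fin n0 ⊕ (Σ k, Fin (m k))) Bool :=
  fun q q' => match q, q' with
  | Sum.inl i, Sum.inl j => A0 i j
  | Sum.inl i, Sum.inr b => Ek b.1 i b.2
  | Sum.inr _, Sum.inl _ => false
  | Sum.inr a, Sum.inr b => if h : b.1 = a.1 then Ak a.1 a.2 (h ▸ b.2) else false

/-- The input pattern `B̄' = [B̄₀ᵀ, 0, …, 0]ᵀ`. -/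
def blockB {n0 l p0 : ℕ} {m : Fin l → ℕ} (B0 : Matrix (Fin n0) (Fin p0) Bool) :
    Matrix (Fin n0 ⊕ (Σ k, Fin (m k))) (Fin p0) Bool :=
  fun q j => match q with
  | Sum.inl i => B0 i j
  | Sum.inr _ => false

/-- Weight `1` on edges joining two state vertices of block `0` or two state vertices
outside block `0`, and weight `2` on every other edge (in particular on input edges). -/
def blockWeight {n0 l p0 : ℕ} {m : Fin l → ℕ} :
    ((Fin n0 ⊕ (Σ k : Fin l, Fin (m k))) ⊕ Fin p0) × (Fin n0 ⊕ (Σ k : Fin l, Fin (m k))) → ℕ :=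
  fun e => match e.1, e.2 with
  | Sum.inl (Sum.inl _), Sum.inl _ => 1
  | Sum.inl (Sum.inr _), Sum.inr _ => 1
  | _, _ => 2

/-! Each block is an edge set `A × B` whose right vertices `B` receive edges only from `A` (for
block `0` after exchanging the two sides of the graph), with weight `1` inside the block and
weight at least `2` from `A` to outside `B`. If `M ∩ A × B` were not maximum in the block,
augmenting it inside the block would give a block matching with one more edge, using the left
vertices of `M ∩ A × B` and one new vertex `a`. It conflicts with the rest of `M` only at the
edge of `M` at `a`, which leaves the block and so weighs at least `2`; trading that edge and
`M ∩ A × B` for the augmented block matching either enlarges `M` or keeps its size and lowers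
its weight. -/

open Set

section Matching

variable {α β : Type*} {E : α → β → Prop}

theorem isMatching_iff {M : Set (α × β)} :
    IsMatching E M ↔ (∀ e ∈ M, E e.1 e.2) ∧ InjOn Prod.fst M ∧ InjOn Prod.snd M :=
  Iff.rfl

theorem IsMatching.injOn_fst {M : Set (α × β)} (h : IsMatching E M) : InjOn Prod.fst M :=
  h.2.1

theorem IsMatching.injOn_snd {M : Set (α × β)} (h : IsMatching E M) : InjOn Prod.snd M :=
  h.2.2

theorem IsMatching.mono {M N : Set (α × β)} (hM : IsMatching E M) (h : N ⊆ M) :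
    IsMatching E N :=
  ⟨fun e he => hM.1 e (h he), hM.injOn_fst.mono h, hM.injOn_snd.mono h⟩

theorem IsMatching.union {M N : Set (α × β)} (hM : IsMatching E M) (hN : IsMatching E N)
    (h₁ : ∀ e ∈ M, ∀ f ∈ N, e.1 ≠ f.1) (h₂ : ∀ e ∈ M, ∀ f ∈ N, e.2 ≠ f.2) :
    IsMatching E (M ∪ N) := by
  have hdisj : Disjoint M N := disjoint_left.2 fun e he he' => h₁ e he e he' rfl
  refine isMatching_iff.2 ⟨?_, (injOn_union hdisj).2 ⟨hM.injOn_fst, hN.injOn_fst, h₁⟩,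
    (injOn_union hdisj).2 ⟨hM.injOn_snd, hN.injOn_snd, h₂⟩⟩
  rintro e (he | he)
  exacts [hM.1 e he, hN.1 e he]

theorem IsMatching.insert_of_notMem {M : Set (α × β)} (hM : IsMatching E M) {a : α} {b : β}
    (hab : E a b) (ha : a ∉ Prod.fst '' M) (hb : b ∉ Prod.snd '' M) :
    IsMatching E (insert (a, b) M) := by
  refine IsMatching.union (M := {(a, b)}) ⟨by simpa using hab, injOn_singleton _ _,
    injOn_singleton _ _⟩ hM ?_ ?_
  · rintro _ rfl f hf rfl; exact ha ⟨f, hf, rfl⟩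
  · rintro _ rfl f hf rfl; exact hb ⟨f, hf, rfl⟩

theorem Set.InjOn.exists_mem_notMem_image {γ : Type*} {f : α → γ} {K N : Set α}
    (hN : InjOn f N) (hK : K.Finite) (hlt : K.ncard < N.ncard) : ∃ e ∈ N, f e ∉ f '' K := by
  by_contra! h
  have : N.ncard ≤ K.ncard := calc
    N.ncard = (f '' N).ncard := hN.ncard_image.symm
    _ ≤ (f '' K).ncard := ncard_le_ncard (image_subset_iff.2 h) (hK.image f)
    _ ≤ K.ncard := ncard_image_le hK
  omega

/-- An edge of `N` at a right vertex `b` missed by `K` either extends `K`, or its left end is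
matched in `K` by some `f`; then augment `K \ {f}` by `N \ {(f.1, b)}` and add `(f.1, b)`. -/
theorem IsMatching.exists_augment {K N : Set (α × β)} (hK : IsMatching E K)
    (hN : IsMatching E N) (hKfin : K.Finite) (hlt : K.ncard < N.ncard) :
    ∃ K' ⊆ K ∪ N, IsMatching E K' ∧ K'.ncard = K.ncard + 1 ∧
      ∃ e ∈ K', Prod.fst '' K' ⊆ insert e.1 (Prod.fst '' K) := by
  obtain ⟨n, hn⟩ : ∃ n, K.ncard = n := ⟨_, rfl⟩
  induction n using Nat.strong_induction_on generalizing K N with | _ n ih => ?_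
  obtain ⟨⟨a, b⟩, habN, hb⟩ := hN.injOn_snd.exists_mem_notMem_image hKfin hlt
  by_cases ha : a ∈ Prod.fst '' K
  · obtain ⟨f, hfK, rfl⟩ := ha
    have hKpos : 0 < K.ncard := (ncard_pos hKfin).2 ⟨f, hfK⟩
    obtain ⟨K₁, hK₁sub, hK₁, hK₁card, e, heK₁, hK₁fst⟩ :=
      ih (n - 1) (by omega) (K := K \ {f}) (N := N \ {(f.1, b)}) (hK.mono sdiff_subset)
        (hN.mono sdiff_subset) hKfin.sdiff
        (by rw [ncard_sdiff_singleton_of_mem hfK, ncard_sdiff_singleton_of_mem habN]; omega)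
        (by rw [ncard_sdiff_singleton_of_mem hfK, hn])
    have hf₁ : f.1 ∉ Prod.fst '' K₁ := by
      rintro ⟨g, hg, hgf⟩
      rcases hK₁sub hg with ⟨hgK, hgf'⟩ | ⟨hgN, hgb⟩
      exacts [hgf' (hK.injOn_fst hgK hfK hgf), hgb (hN.injOn_fst hgN habN hgf)]
    have hb₁ : b ∉ Prod.snd '' K₁ := by
      rintro ⟨g, hg, hgb⟩
      rcases hK₁sub hg with ⟨hgK, -⟩ | ⟨hgN, hgb'⟩
      exacts [hb ⟨g, hgK, hgb⟩, hgb' (hN.injOn_snd hgN habN hgb)]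
    refine ⟨insert (f.1, b) K₁,
      insert_subset (Or.inr habN) (hK₁sub.trans (union_subset_union sdiff_subset sdiff_subset)),
      hK₁.insert_of_notMem (hN.1 _ habN) hf₁ hb₁, ?_, e, mem_insert_of_mem _ heK₁, ?_⟩
    · rw [ncard_insert_of_notMem (a := (f.1, b)) (fun h => hf₁ ⟨_, h, rfl⟩)
        (finite_of_ncard_ne_zero (by omega)), hK₁card, ncard_sdiff_singleton_of_mem hfK]
      omega
    · rw [image_insert_eq]
      exact insert_subset (mem_insert_of_mem _ ⟨f, hfK, rfl⟩)
        (hK₁fst.trans (insert_subset_insert (image_mono sdiff_subset)))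
  · refine ⟨insert (a, b) K, insert_subset (Or.inr habN) subset_union_left,
      hK.insert_of_notMem (hN.1 _ habN) ha hb,
      ncard_insert_of_notMem (fun h => ha ⟨_, h, rfl⟩) hKfin, (a, b), mem_insert _ _,
      by rw [image_insert_eq]⟩

theorem IsMatching.preimage_prodMap {α' β' : Type*} {E' : α' → β' → Prop} {ι : α' → α}
    {ρ : β' → β} (hι : ι.Injective) (hρ : ρ.Injective) (hE : ∀ a b, E' a b ↔ E (ι a) (ρ b))
    {M : Set (α × β)} (hM : IsMatching E M) : IsMatching E' (Prod.map ι ρ ⁻¹' M) :=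
  ⟨fun _ he => (hE _ _).2 (hM.1 _ he),
    fun _ he _ hf h => hι.prodMap hρ (hM.injOn_fst he hf (congrArg ι h)),
    fun _ he _ hf h => hι.prodMap hρ (hM.injOn_snd he hf (congrArg ρ h))⟩

theorem IsMatching.image_prodMap {α' β' : Type*} {E' : α' → β' → Prop} {ι : α' → α}
    {ρ : β' → β} (hι : ι.Injective) (hρ : ρ.Injective) (hE : ∀ a b, E' a b → E (ι a) (ρ b))
    {N : Set (α' × β')} (hN : IsMatching E' N) : IsMatching E (Prod.map ι ρ '' N) := by
  refine isMatching_iff.2 ⟨?_, ?_, ?_⟩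
  · rintro _ ⟨e, he, rfl⟩; exact hE _ _ (hN.1 e he)
  · rintro _ ⟨e, he, rfl⟩ _ ⟨f, hf, rfl⟩ h
    exact congrArg _ (hN.injOn_fst he hf (hι h))
  · rintro _ ⟨e, he, rfl⟩ _ ⟨f, hf, rfl⟩ h
    exact congrArg _ (hN.injOn_snd he hf (hρ h))

theorem IsMatching.preimage_swap {M : Set (α × β)} (hM : IsMatching E M) :
    IsMatching (flip E) (Prod.swap ⁻¹' M) :=
  ⟨fun _ he => hM.1 _ he, fun _ he _ hf h => Prod.swap_injective (hM.injOn_snd he hf h),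
    fun _ he _ hf h => Prod.swap_injective (hM.injOn_fst he hf h)⟩

theorem ncard_preimage_swap (M : Set (α × β)) : (Prod.swap ⁻¹' M).ncard = M.ncard :=
  ncard_preimage_of_injective_subset_range Prod.swap_injective fun e _ => ⟨e.swap, e.swap_swap⟩

theorem IsMaxMatching.preimage_swap {M : Set (α × β)} (hM : IsMaxMatching E M) :
    IsMaxMatching (flip E) (Prod.swap ⁻¹' M) :=
  ⟨hM.1.preimage_swap, fun N hN => by
    simpa only [ncard_preimage_swap] using hM.2 _ hN.preimage_swap⟩

theorem finsum_mem_preimage_swap {γ : Type*} [AddCommMonoid γ] (f : α × β → γ)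
    (s : Set (β × α)) : ∑ᶠ e ∈ Prod.swap ⁻¹' s, f e = ∑ᶠ e ∈ s, f e.swap := by
  rw [← image_swap_eq_preimage_swap, finsum_mem_image Prod.swap_injective.injOn]

theorem IsMinWtMaxMatching.preimage_swap {c : α × β → ℕ} {M : Set (α × β)}
    (hM : IsMinWtMaxMatching E c M) :
    IsMinWtMaxMatching (flip E) (c ∘ Prod.swap) (Prod.swap ⁻¹' M) := by
  refine ⟨hM.1.preimage_swap, fun N hN => ?_⟩
  calc ∑ᶠ e ∈ Prod.swap ⁻¹' M, (c ∘ Prod.swap) e = ∑ᶠ e ∈ M, c e := by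
        simp only [finsum_mem_preimage_swap, Function.comp_apply, Prod.swap_swap]
    _ ≤ ∑ᶠ e ∈ Prod.swap ⁻¹' N, c e := hM.2 _ hN.preimage_swap
    _ = ∑ᶠ e ∈ N, (c ∘ Prod.swap) e := finsum_mem_preimage_swap c N

theorem IsMaxMatching.ncard_le_of_isMatching_sdiff_union [Finite α] [Finite β]
    {M S T : Set (α × β)} (hM : IsMaxMatching E M) (hS : S ⊆ M) (hdisj : Disjoint (M \ S) T)
    (hT : IsMatching E (M \ S ∪ T)) : T.ncard ≤ S.ncard := by
  have := hM.2 _ hT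
  rw [ncard_union_eq hdisj, ← ncard_sdiff_add_ncard_of_subset hS] at this
  omega

theorem IsMinWtMaxMatching.finsum_le_of_isMatching_sdiff_union [Finite α] [Finite β]
    {c : α × β → ℕ} {M S T : Set (α × β)} (hM : IsMinWtMaxMatching E c M) (hS : S ⊆ M)
    (hdisj : Disjoint (M \ S) T) (hT : IsMatching E (M \ S ∪ T)) (hcard : T.ncard = S.ncard) :
    ∑ᶠ e ∈ S, c e ≤ ∑ᶠ e ∈ T, c e := by
  have hmax : IsMaxMatching E (M \ S ∪ T) := ⟨hT, fun N hN => by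
    rw [ncard_union_eq hdisj, hcard, ncard_sdiff_add_ncard_of_subset hS]
    exact hM.1.2 N hN⟩
  have := hM.2 _ hmax
  rw [finsum_mem_union hdisj (toFinite _) (toFinite _), ← finsum_mem_add_sdiff hS (toFinite M)]
    at this
  omega

theorem IsMinWtMaxMatching.ncard_le_ncard_inter_prod [Finite α] [Finite β] {c : α × β → ℕ}
    {M : Set (α × β)} (hM : IsMinWtMaxMatching E c M) {A : Set α} {B : Set β}
    (hB : ∀ a b, E a b → b ∈ B → a ∈ A) (hc₁ : ∀ a ∈ A, ∀ b ∈ B, c (a, b) = 1)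
    (hc₂ : ∀ a ∈ A, ∀ b ∉ B, E a b → 2 ≤ c (a, b)) {N : Set (α × β)} (hN : IsMatching E N)
    (hNAB : N ⊆ A ×ˢ B) : N.ncard ≤ (M ∩ A ×ˢ B).ncard := by
  have hMmatch := hM.1.1
  set K := M ∩ A ×ˢ B
  by_contra! hlt
  obtain ⟨K', hK'sub, hK', hK'card, ⟨a, b⟩, habK', hK'fst⟩ :=
    (hMmatch.mono inter_subset_left).exists_augment hN (toFinite K) hlt
  replace hK'card : K'.ncard = K.ncard + 1 := hK'card
  have hK'AB : K' ⊆ A ×ˢ B := hK'sub.trans (union_subset inter_subset_right hNAB)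
  have hwt_block (s : Set (α × β)) (hs : s ⊆ A ×ˢ B) : ∑ᶠ e ∈ s, c e = s.ncard :=
    (finsum_mem_congr rfl fun e he => hc₁ _ (hs he).1 _ (hs he).2).trans finsum_one
  have hrest_B : ∀ e ∈ M \ K, e.2 ∉ B := fun e he heB =>
    he.2 ⟨he.1, hB _ _ (hMmatch.1 e he.1) heB, heB⟩
  set R := {e ∈ M \ K | e.1 = a}
  have hR : R ⊆ M \ K := sep_subset _ _
  have hKR : Disjoint K R := disjoint_left.2 fun e he he' => he'.1.2 he
  have hS : K ∪ R ⊆ M := union_subset inter_subset_left (hR.trans sdiff_subset)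
  have hdisj : Disjoint (M \ (K ∪ R)) K' :=
    disjoint_left.2 fun e he he' => he.2 (Or.inl ⟨he.1, hK'AB he'⟩)
  have hMstar : IsMatching E (M \ (K ∪ R) ∪ K') := by
    refine (hMmatch.mono sdiff_subset).union hK' ?_ ?_
    · rintro e ⟨he, heKR⟩ f hf hef
      rcases hK'fst ⟨f, hf, rfl⟩ with hfa | ⟨g, hgK, hgf⟩
      · exact heKR (Or.inr ⟨⟨he, fun heK => heKR (Or.inl heK)⟩, hef.trans hfa⟩)
      · exact heKR (Or.inl (hMmatch.injOn_fst he hgK.1 (hef.trans hgf.symm) ▸ hgK))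
    · rintro e ⟨he, heKR⟩ f hf hef
      exact hrest_B e ⟨he, fun heK => heKR (Or.inl heK)⟩ (hef ▸ (hK'AB hf).2)
  obtain ⟨e₀, hRe₀⟩ : ∃ e₀, R = {e₀} := by
    refine ncard_eq_one.1 (le_antisymm ?_ ?_)
    · exact (ncard_le_one_iff (toFinite R)).2 fun he hf =>
        hMmatch.injOn_fst he.1.1 hf.1.1 (he.2.trans hf.2.symm)
    · have := hM.1.ncard_le_of_isMatching_sdiff_union hS hdisj hMstar
      rw [ncard_union_eq hKR] at this
      omega
  have he₀ : e₀ ∈ R := hRe₀ ▸ rfl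
  have hce₀ : 2 ≤ c e₀ := hc₂ _ (he₀.2 ▸ (hK'AB habK').1) _ (hrest_B e₀ (hR he₀))
    (hMmatch.1 e₀ (hR he₀).1)
  have := hM.finsum_le_of_isMatching_sdiff_union hS hdisj hMstar
    (by rw [ncard_union_eq hKR, hRe₀, ncard_singleton, hK'card])
  rw [finsum_mem_union hKR (toFinite _) (toFinite _), hwt_block K inter_subset_right,
    hwt_block K' hK'AB, hK'card, hRe₀, finsum_mem_singleton] at this
  omega

theorem IsMinWtMaxMatching.isMaxMatching_preimage_prodMap [Finite α] [Finite β] {α' β' : Type*}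
    {E' : α' → β' → Prop} {c : α × β → ℕ} {M : Set (α × β)} (hM : IsMinWtMaxMatching E c M)
    {ι : α' → α} {ρ : β' → β} (hι : ι.Injective) (hρ : ρ.Injective)
    (hE : ∀ a b, E' a b ↔ E (ι a) (ρ b)) (hB : ∀ a b, E a (ρ b) → a ∈ range ι)
    (hc₁ : ∀ a b, c (ι a, ρ b) = 1) (hc₂ : ∀ a b, E (ι a) b → b ∉ range ρ → 2 ≤ c (ι a, b)) :
    IsMaxMatching E' (Prod.map ι ρ ⁻¹' M) := by
  have hinj := hι.prodMap hρ
  refine ⟨hM.1.1.preimage_prodMap hι hρ hE, fun N hN => ?_⟩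
  calc N.ncard = (Prod.map ι ρ '' N).ncard := (ncard_image_of_injective _ hinj).symm
    _ ≤ (M ∩ range ι ×ˢ range ρ).ncard := by
      refine hM.ncard_le_ncard_inter_prod ?_ ?_ ?_ (hN.image_prodMap hι hρ fun a b => (hE a b).1)
        (range_prodMap ▸ image_subset_range _ _)
      · rintro a _ h ⟨b, rfl⟩; exact hB a b h
      · rintro _ ⟨a, rfl⟩ _ ⟨b, rfl⟩; exact hc₁ a b
      · rintro _ ⟨a, rfl⟩ b hb h; exact hc₂ a b h hb
    _ = (Prod.map ι ρ ⁻¹' M).ncard := by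
      rw [← range_prodMap, ← image_preimage_eq_inter_range, ncard_image_of_injective _ hinj]

end Matching

theorem exists_eq_inr_of_blockA_inr {n0 l : ℕ} {m : Fin l → ℕ}
    {A0 : Matrix (Fin n0) (Fin n0) Bool} {Ak : ∀ k, Matrix (Fin (m k)) (Fin (m k)) Bool}
    {Ek : ∀ k, Matrix (Fin n0) (Fin (m k)) Bool} {b : Σ k, Fin (m k)}
    {q : Fin n0 ⊕ (Σ k, Fin (m k))} (hq : blockA A0 Ak Ek (Sum.inr b) q = true) :
    ∃ a, q = Sum.inr ⟨b.1, a⟩ := by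
  rcases q with i | ⟨k, a⟩
  · simp [blockA] at hq
  · simp only [blockA] at hq
    split_ifs at hq with h
    subst h
    exact ⟨a, rfl⟩

theorem minWtMaxMatching_restricts_to_maxMatchings
    {n0 l p0 : ℕ} {m : Fin l → ℕ}
    (A0 : Matrix (Fin n0) (Fin n0) Bool)
    (Ak : ∀ k, Matrix (Fin (m k)) (Fin (m k)) Bool)
    (Ek : ∀ k, Matrix (Fin n0) (Fin (m k)) Bool)
    (B0 : Matrix (Fin n0) (Fin p0) Bool)
    (M : Set (((Fin n0 ⊕ (Σ k : Fin l, Fin (m k))) ⊕ Fin p0) × (Fin n0 ⊕ (Σ k : Fin l, Fin (m k)))))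
    (hM : IsMinWtMaxMatching (sysBipEdge (blockA A0 Ak Ek) (blockB B0)) blockWeight M) :
    IsMaxMatching (stateBipEdge A0)
      {e : Fin n0 × Fin n0 | (Sum.inl (Sum.inl e.1), Sum.inl e.2) ∈ M} ∧
    ∀ k : Fin l, IsMaxMatching (stateBipEdge (Ak k))
      {e : Fin (m k) × Fin (m k) |
        ((Sum.inl (Sum.inr ⟨k, e.1⟩) : (Fin n0 ⊕ (Σ k : Fin l, Fin (m k))) ⊕ Fin p0),
          (Sum.inr ⟨k, e.2⟩ : Fin n0 ⊕ (Σ k : Fin l, Fin (m k)))) ∈ M} := by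
  constructor
  · refine (hM.preimage_swap.isMaxMatching_preimage_prodMap (E' := flip (stateBipEdge A0))
      Sum.inl_injective (Sum.inl_injective.comp Sum.inl_injective) (fun _ _ => Iff.rfl) ?_
      (fun _ _ => rfl) ?_).preimage_swap
    · rintro (i | b) j h
      · exact ⟨i, rfl⟩
      · obtain ⟨a, ha⟩ := exists_eq_inr_of_blockA_inr h
        cases ha
    · rintro i ((j | b) | u) - h
      exacts [absurd ⟨j, rfl⟩ h, le_rfl, le_rfl]
  · intro k
    refine hM.isMaxMatching_preimage_prodMap (ι := fun a => Sum.inl (Sum.inr ⟨k, a⟩))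
      (ρ := fun b => Sum.inr ⟨k, b⟩) (fun _ _ h => by simpa using h) (fun _ _ h => by simpa using h)
      (fun a b => by simp [stateBipEdge, sysBipEdge, blockA]) ?_ (fun _ _ => rfl) ?_
    · rintro ((j | a) | u) b h
      · obtain ⟨a, ha⟩ := exists_eq_inr_of_blockA_inr h
        cases ha
      · obtain ⟨a', ha'⟩ := exists_eq_inr_of_blockA_inr h
        exact ⟨a', congrArg (Sum.inl ∘ Sum.inr) (Sum.inr.inj ha').symm⟩
      · cases h
    · rintro a (i | ⟨k', b⟩) h hb
      · exact le_rfl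
      · obtain ⟨a', ha'⟩ := exists_eq_inr_of_blockA_inr h
        obtain rfl : k = k' := congrArg Sigma.fst (Sum.inr.inj ha')
        exact absurd ⟨b, rfl⟩ hb
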